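/- arXiv:math/0703422 — 2 statements merged into one kernel-verified Lean document; each statement's English description precedes it below -/
import Mathlib

section
/- Let M be a differential module over 𝕂 and give the dual space M* = Hom_𝕂(M, 𝕂) the differential module structure (D u)(m) := δ(u(m)) − u(D(m)). Identify K ⊗_𝕂 M* with the K-linear dual of K ⊗_𝕂 M in the natural way. Assume M has a full solution space. Then for every u ∈ Sol(M*) and v ∈ Sol(M) the pairing ⟨u, v⟩ lies in k, and the induced k-linear map Sol(M*) → Hom_k(Sol(M), k) is an isomorphism. -/
/-!
Differentiating a shortest relation among solutions, normalised to have a coefficient `1`, yields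
a shorter one; so solutions that are independent over the constants `k` stay independent over
`K`, and a full solution space contains a `K`-basis of `K ⊗ M`. The pairing satisfies
`δ⟨u, v⟩ = ⟨Du, v⟩ + ⟨u, Dv⟩`, so solutions pair to constants, and a `K`-linear functional on
`K ⊗ M` comes from a solution of `M*` exactly when it is constant on that basis of solutions.
-/

open TensorProduct

section Constants

variable {K V ι : Type*} [Field K] [AddCommGroup V] [Module K V] {k : Subfield K}

theorem LinearIndependent.eq_zero_of_sum_eq_zero_of_forall_mem {v : ι → V}
    (hv : LinearIndependent k v) {s : Finset ι} {c : ι → K} (hc : ∀ i ∈ s, c i ∈ k)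
    (hsum : ∑ i ∈ s, c i • v i = 0) : ∀ i ∈ s, c i = 0 := by
  classical
  let e : ι → k := fun i => if h : c i ∈ k then ⟨c i, h⟩ else 0
  have he : ∀ i ∈ s, (e i : K) = c i := fun i hi => by simp [e, hc i hi]
  have hsum' : ∑ i ∈ s, e i • v i = 0 := by
    rw [← hsum]
    exact Finset.sum_congr rfl fun i hi => by rw [Subfield.smul_def, he i hi]
  intro i hi
  rw [← he i hi, linearIndependent_iff'.mp hv s e hsum' i hi, ZeroMemClass.coe_zero]

variable {δ : K → K} (D : V →+ V)

theorem map_sum_smul_of_map_eq_zero (hD : ∀ (c : K) (x : V), D (c • x) = δ c • x + c • D x)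
    {v : ι → V} (hv : ∀ i, D (v i) = 0) (s : Finset ι) (c : ι → K) :
    D (∑ i ∈ s, c i • v i) = ∑ i ∈ s, δ (c i) • v i := by
  simp only [map_sum, hD, hv, smul_zero, add_zero]

theorem LinearIndependent.of_constants (hD : ∀ (c : K) (x : V), D (c • x) = δ c • x + c • D x)
    (hk : ∀ c, c ∈ k ↔ δ c = 0) {v : ι → V} (hv : ∀ i, D (v i) = 0)
    (hli : LinearIndependent k v) : LinearIndependent K v := by
  classical
  rw [linearIndependent_iff']
  intro s
  induction s using Finset.strongInduction with
  | _ s ih =>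
  intro c hsum i hi
  by_contra hci
  set d : ι → K := fun j => (c i)⁻¹ * c j with hd
  have hdi : d i = 1 := inv_mul_cancel₀ hci
  have hdsum : ∑ j ∈ s, d j • v j = 0 := by
    simp only [hd, mul_smul, ← Finset.smul_sum, hsum, smul_zero]
  have hδsum : ∑ j ∈ s.erase i, δ (d j) • v j = 0 := by
    have h := map_sum_smul_of_map_eq_zero D hD hv s d
    rwa [hdsum, map_zero, ← Finset.sum_erase_add s _ hi, hdi, (hk 1).mp k.one_mem, zero_smul,
      add_zero, eq_comm] at h
  have hconst : ∀ j ∈ s, d j ∈ k := by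
    intro j hj
    rw [hk]
    by_cases hji : j = i
    · rw [hji, hdi, ← hk]; exact k.one_mem
    · exact ih _ (Finset.erase_ssubset hi) _ hδsum j (Finset.mem_erase.mpr ⟨hji, hj⟩)
  exact one_ne_zero (hdi ▸ hli.eq_zero_of_sum_eq_zero_of_forall_mem hconst hdsum i hi)

theorem finiteDimensional_of_forall_mem_map_eq_zero [FiniteDimensional K V]
    (hD : ∀ (c : K) (x : V), D (c • x) = δ c • x + c • D x) (hk : ∀ c, c ∈ k ↔ δ c = 0)
    (S : Submodule k V) (hS : ∀ x ∈ S, D x = 0) : FiniteDimensional k S := by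
  let b := Module.Basis.ofVectorSpace k S
  have : Finite (Module.Basis.ofVectorSpaceIndex k S) :=
    (LinearIndependent.of_constants D hD hk (fun i => hS _ (b i).2)
      (b.linearIndependent.map' S.subtype S.ker_subtype)).finite
  exact b.finiteDimensional_of_finite

theorem Module.Basis.exists_basis_coe_eq_of_finrank_eq [FiniteDimensional K V] [Fintype ι]
    (hD : ∀ (c : K) (x : V), D (c • x) = δ c • x + c • D x) (hk : ∀ c, c ∈ k ↔ δ c = 0)
    {S : Submodule k V} (hS : ∀ x ∈ S, D x = 0) (b : Module.Basis ι k S)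
    (hfull : Module.finrank k S = Module.finrank K V) :
    ∃ B : Module.Basis ι K V, ∀ i, B i = b i := by
  have hli : LinearIndependent K fun i => (b i : V) :=
    LinearIndependent.of_constants D hD hk (fun i => hS _ (b i).2)
      (b.linearIndependent.map' S.subtype S.ker_subtype)
  have hspan :=
    hli.span_eq_top_of_card_eq_finrank' (by rw [← hfull, Module.finrank_eq_card_basis b])
  exact ⟨Module.Basis.mk hli hspan.ge, Module.Basis.mk_apply hli hspan.ge⟩

end Constants

section BaseChange

variable {𝕂 K M : Type*} [CommRing 𝕂] [CommRing K] [Algebra 𝕂 K] [AddCommGroup M] [Module 𝕂 M]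
  {δ : K → K}

theorem map_smul_of_map_tmul (hδ : ∀ a b : K, δ (a * b) = δ a * b + a * δ b) {DM : M → M}
    (D : K ⊗[𝕂] M →+ K ⊗[𝕂] M) (hD : ∀ (c : K) (x : M), D (c ⊗ₜ x) = δ c ⊗ₜ x + c ⊗ₜ DM x)
    (c : K) (x : K ⊗[𝕂] M) : D (c • x) = δ c • x + c • D x := by
  induction x using TensorProduct.induction_on with
  | zero => simp only [smul_zero, map_zero, add_zero]
  | tmul a m =>
    simp only [smul_tmul', smul_eq_mul, hD, hδ, add_tmul, smul_add]
    abel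
  | add x y hx hy =>
    simp only [smul_add, map_add, hx, hy]
    abel

theorem leibniz_pairing (hδ_add : ∀ a b : K, δ (a + b) = δ a + δ b)
    (hδ : ∀ a b : K, δ (a * b) = δ a * b + a * δ b) {δ𝕂 : 𝕂 → 𝕂}
    (hcompat : ∀ a : 𝕂, δ (algebraMap 𝕂 K a) = algebraMap 𝕂 K (δ𝕂 a)) {DM : M → M}
    {Dd : Module.Dual 𝕂 M → Module.Dual 𝕂 M} (hDd : ∀ u m, Dd u m = δ𝕂 (u m) - u (DM m))
    (DKM : K ⊗[𝕂] M →+ K ⊗[𝕂] M) (hDKM : ∀ (c : K) (x : M), DKM (c ⊗ₜ x) = δ c ⊗ₜ x + c ⊗ₜ DM x)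
    (DKd : K ⊗[𝕂] Module.Dual 𝕂 M →+ K ⊗[𝕂] Module.Dual 𝕂 M)
    (hDKd : ∀ (c : K) (u : Module.Dual 𝕂 M), DKd (c ⊗ₜ u) = δ c ⊗ₜ u + c ⊗ₜ Dd u)
    (Φ : K ⊗[𝕂] Module.Dual 𝕂 M →ₗ[K] Module.Dual K (K ⊗[𝕂] M))
    (hΦ : ∀ (f g : K) (u : Module.Dual 𝕂 M) (m : M),
      Φ (f ⊗ₜ u) (g ⊗ₜ m) = f * g * algebraMap 𝕂 K (u m))
    (x : K ⊗[𝕂] Module.Dual 𝕂 M) (v : K ⊗[𝕂] M) :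
    δ (Φ x v) = Φ (DKd x) v + Φ x (DKM v) := by
  have hδ0 : δ 0 = 0 := map_zero (AddMonoidHom.mk' δ hδ_add)
  induction x using TensorProduct.induction_on with
  | zero => simp only [map_zero, LinearMap.zero_apply, hδ0, add_zero]
  | tmul f u =>
    induction v using TensorProduct.induction_on with
    | zero => simp only [map_zero, hδ0, add_zero]
    | tmul g m =>
      simp only [hΦ, hDKd, hDKM, map_add, LinearMap.add_apply, hδ, hcompat, hDd, map_sub]
      ring
    | add v w hv hw =>
      simp only [map_add, hδ_add, hv, hw]
      abel
  | add x y hx hy =>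
    simp only [map_add, LinearMap.add_apply, hδ_add, hx, hy]
    abel

end BaseChange

theorem stmt_7_general {K 𝕂 : Type*} [Field K] [Field 𝕂] [Algebra 𝕂 K]
    (δ : K → K)
    (hδ_add : ∀ a b : K, δ (a + b) = δ a + δ b)
    (hδ_leibniz : ∀ a b : K, δ (a * b) = δ a * b + a * δ b)
    (δ𝕂 : 𝕂 → 𝕂)
    (hcompat : ∀ a : 𝕂, δ (algebraMap 𝕂 K a) = algebraMap 𝕂 K (δ𝕂 a))
    (k : Subfield K) (hk : ∀ c : K, c ∈ k ↔ δ c = 0)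
    -- the differential module M over 𝕂
    {M : Type*} [AddCommGroup M] [Module 𝕂 M] [FiniteDimensional 𝕂 M]
    (DM : M → M)
    -- the differential structure on the dual module M* = Hom_𝕂(M, 𝕂)
    (Dd : Module.Dual 𝕂 M → Module.Dual 𝕂 M)
    (hDd : ∀ (u : Module.Dual 𝕂 M) (m : M), Dd u m = δ𝕂 (u m) - u (DM m))
    -- the operators D_K on K ⊗ M and K ⊗ M*
    (DKM : K ⊗[𝕂] M → K ⊗[𝕂] M)
    (hDKM_add : ∀ x y, DKM (x + y) = DKM x + DKM y)
    (hDKM : ∀ (c : K) (x : M), DKM (c ⊗ₜ[𝕂] x) = δ c ⊗ₜ[𝕂] x + c ⊗ₜ[𝕂] DM x)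
    (DKd : K ⊗[𝕂] Module.Dual 𝕂 M → K ⊗[𝕂] Module.Dual 𝕂 M)
    (hDKd_add : ∀ x y, DKd (x + y) = DKd x + DKd y)
    (hDKd : ∀ (c : K) (u : Module.Dual 𝕂 M), DKd (c ⊗ₜ[𝕂] u) = δ c ⊗ₜ[𝕂] u + c ⊗ₜ[𝕂] Dd u)
    -- the natural identification of K ⊗ M* with the K-linear dual of K ⊗ M
    (Φ : K ⊗[𝕂] Module.Dual 𝕂 M →ₗ[K] Module.Dual K (K ⊗[𝕂] M))
    (hΦ : ∀ (f g : K) (u : Module.Dual 𝕂 M) (m : M),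
      Φ (f ⊗ₜ[𝕂] u) (g ⊗ₜ[𝕂] m) = f * g * algebraMap 𝕂 K (u m))
    (hΦ_bij : Function.Bijective Φ)
    -- the solution spaces
    (SM : Submodule k (K ⊗[𝕂] M)) (hSM : ∀ x, x ∈ SM ↔ DKM x = 0)
    (Sd : Submodule k (K ⊗[𝕂] Module.Dual 𝕂 M)) (hSd : ∀ x, x ∈ Sd ↔ DKd x = 0)
    -- M has a full solution space
    (hfullM : Module.finrank k SM = Module.finrank 𝕂 M) :
    -- the pairing of solutions has constant values ...
    (∀ u ∈ Sd, ∀ v ∈ SM, Φ u v ∈ k) ∧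
    -- ... and the induced k-linear map Sol(M*) → Hom_k(Sol(M), k) is bijective
    (∀ u ∈ Sd, (∀ v ∈ SM, Φ u v = 0) → u = 0) ∧
    (∀ L : SM →ₗ[k] k, ∃ u ∈ Sd, ∀ (v : K ⊗[𝕂] M) (hv : v ∈ SM),
      Φ u v = (L ⟨v, hv⟩ : K)) := by
  let D := AddMonoidHom.mk' DKM hDKM_add
  have hD := map_smul_of_map_tmul hδ_leibniz D hDKM
  have hpair : ∀ x v, δ (Φ x v) = Φ (DKd x) v + Φ x (DKM v) :=
    leibniz_pairing hδ_add hδ_leibniz hcompat hDd D hDKM (AddMonoidHom.mk' DKd hDKd_add) hDKd Φ hΦ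
  have hSD : ∀ x ∈ SM, D x = 0 := fun x hx => (hSM x).mp hx
  have := finiteDimensional_of_forall_mem_map_eq_zero D hD hk SM hSD
  have : Module.Free k SM := Module.Free.of_divisionRing k SM
  let b := Module.finBasis k SM
  obtain ⟨B, hB⟩ := b.exists_basis_coe_eq_of_finrank_eq D hD hk hSD
    (by rw [hfullM, Module.finrank_baseChange])
  refine ⟨fun u hu v hv => ?_, fun u _ hu => hΦ_bij.1 ?_, fun L => ?_⟩
  · rw [hk, hpair, (hSd u).mp hu, (hSM v).mp hv]
    simp
  · exact B.ext fun i => by rw [map_zero, hB]; exact hu _ (b i).2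
  obtain ⟨u, hu⟩ := hΦ_bij.2 (B.constr K fun i => (L (b i) : K))
  have huB : ∀ i, Φ u (b i) = L (b i) := fun i => by rw [hu, ← hB, B.constr_basis]
  refine ⟨u, (hSd u).mpr (hΦ_bij.1 (B.ext fun i => ?_)), fun v hv => ?_⟩
  · have h := hpair u (B i)
    rw [hB, huB, (hk _).mp (L (b i)).2, (hSM _).mp (b i).2, map_zero, add_zero] at h
    rw [map_zero, LinearMap.zero_apply, hB, ← h]
  · exact LinearMap.congr_fun (b.ext (f₁ := ((Φ u).restrictScalars k).comp SM.subtype)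
      (f₂ := (Algebra.linearMap k K).comp L) huB) ⟨v, hv⟩

/-- with `K/𝕂`, `δ`, constants `k` as usual, let `M` be a differential
`𝕂`-module with full solution space and give `M* = Hom_𝕂(M,𝕂)` the structure
`(Du)(m) = δ(u(m)) - u(D m)`. Identifying `K ⊗ M*` with the `K`-dual of `K ⊗ M` via the
natural pairing `Φ`, every `u ∈ Sol(M*)` pairs `Sol(M)` into the constants `k`, and the
induced `k`-linear map `Sol(M*) → Hom_k(Sol(M), k)` is an isomorphism. -/
theorem stmt_7 {K 𝕂 : Type*} [Field K] [Field 𝕂] [Algebra 𝕂 K] [CharZero K]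
    (δ : K → K)
    (hδ_add : ∀ a b : K, δ (a + b) = δ a + δ b)
    (hδ_leibniz : ∀ a b : K, δ (a * b) = δ a * b + a * δ b)
    (δ𝕂 : 𝕂 → 𝕂)
    (hcompat : ∀ a : 𝕂, δ (algebraMap 𝕂 K a) = algebraMap 𝕂 K (δ𝕂 a))
    (k : Subfield K) (hk : ∀ c : K, c ∈ k ↔ δ c = 0)
    -- the differential module M over 𝕂
    {M : Type*} [AddCommGroup M] [Module 𝕂 M] [FiniteDimensional 𝕂 M]
    (DM : M → M) (hDM_add : ∀ x y : M, DM (x + y) = DM x + DM y)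
    (hDM : ∀ (a : 𝕂) (x : M), DM (a • x) = δ𝕂 a • x + a • DM x)
    -- the differential structure on the dual module M* = Hom_𝕂(M, 𝕂)
    (Dd : Module.Dual 𝕂 M → Module.Dual 𝕂 M)
    (hDd_add : ∀ u v, Dd (u + v) = Dd u + Dd v)
    (hDd : ∀ (u : Module.Dual 𝕂 M) (m : M), Dd u m = δ𝕂 (u m) - u (DM m))
    -- the operators D_K on K ⊗ M and K ⊗ M*
    (DKM : K ⊗[𝕂] M → K ⊗[𝕂] M)
    (hDKM_add : ∀ x y, DKM (x + y) = DKM x + DKM y)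
    (hDKM : ∀ (c : K) (x : M), DKM (c ⊗ₜ[𝕂] x) = δ c ⊗ₜ[𝕂] x + c ⊗ₜ[𝕂] DM x)
    (DKd : K ⊗[𝕂] Module.Dual 𝕂 M → K ⊗[𝕂] Module.Dual 𝕂 M)
    (hDKd_add : ∀ x y, DKd (x + y) = DKd x + DKd y)
    (hDKd : ∀ (c : K) (u : Module.Dual 𝕂 M), DKd (c ⊗ₜ[𝕂] u) = δ c ⊗ₜ[𝕂] u + c ⊗ₜ[𝕂] Dd u)
    -- the natural identification of K ⊗ M* with the K-linear dual of K ⊗ M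
    (Φ : K ⊗[𝕂] Module.Dual 𝕂 M →ₗ[K] Module.Dual K (K ⊗[𝕂] M))
    (hΦ : ∀ (f g : K) (u : Module.Dual 𝕂 M) (m : M),
      Φ (f ⊗ₜ[𝕂] u) (g ⊗ₜ[𝕂] m) = f * g * algebraMap 𝕂 K (u m))
    (hΦ_bij : Function.Bijective Φ)
    -- the solution spaces
    (SM : Submodule k (K ⊗[𝕂] M)) (hSM : ∀ x, x ∈ SM ↔ DKM x = 0)
    (Sd : Submodule k (K ⊗[𝕂] Module.Dual 𝕂 M)) (hSd : ∀ x, x ∈ Sd ↔ DKd x = 0)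
    -- M has a full solution space
    (hfullM : Module.finrank k SM = Module.finrank 𝕂 M) :
    -- the pairing of solutions has constant values ...
    (∀ u ∈ Sd, ∀ v ∈ SM, Φ u v ∈ k) ∧
    -- ... and the induced k-linear map Sol(M*) → Hom_k(Sol(M), k) is bijective
    (∀ u ∈ Sd, (∀ v ∈ SM, Φ u v = 0) → u = 0) ∧
    (∀ L : SM →ₗ[k] k, ∃ u ∈ Sd, ∀ (v : K ⊗[𝕂] M) (hv : v ∈ SM),
      Φ u v = (L ⟨v, hv⟩ : K)) :=
  stmt_7_general δ hδ_add hδ_leibniz δ𝕂 hcompat k hk DM Dd hDd DKM hDKM_add hDKM DKd hDKd_add hDKd Φ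
    hΦ hΦ_bij SM hSM Sd hSd hfullM
end

section
/- Let R be a commutative ring with a derivation δ, and let g be an invertible n×n matrix over R. Define the 2n×2n block matrices P(g) = [[g, δg],[0, g]] (δ applied entrywise) and S = [[0, I_n],[I_n, 0]]. Then P((g^{-1})^T) = S · (P(g)^{-1})^T · S, where ^T denotes matrix transpose. -/
/-! Entrywise, a derivation is again a derivation on matrices, so `P` is multiplicative and
`P(g)⁻¹ = P(g⁻¹)`. Transposing `P(A)` moves `(δA)ᵀ` into the lower-left block, conjugation by `S`
moves it back, and entrywise `δ` commutes with transposition, so `S P(A)ᵀ S = P(Aᵀ)` for every `A`. -/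

def prolong {R : Type*} [CommRing R] {n : ℕ} (δ : R → R) (g : Matrix (Fin n) (Fin n) R) :
    Matrix (Fin n ⊕ Fin n) (Fin n ⊕ Fin n) R :=
  Matrix.fromBlocks g (g.map δ) 0 g

namespace Matrix

variable {R : Type*} [CommRing R]

theorem map_mul_of_leibniz {m n p : Type*} [Fintype n] (δ : R → R)
    (hδ_add : ∀ a b : R, δ (a + b) = δ a + δ b)
    (hδ_leibniz : ∀ a b : R, δ (a * b) = δ a * b + a * δ b)
    (A : Matrix m n R) (B : Matrix n p R) :
    (A * B).map δ = A.map δ * B + A * B.map δ := by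
  let D : R →+ R := AddMonoidHom.mk' δ hδ_add
  ext i j
  change D (∑ k, A i k * B k j) = _
  simp only [map_sum, add_apply, mul_apply, map_apply, ← Finset.sum_add_distrib]
  exact Finset.sum_congr rfl fun k _ => hδ_leibniz _ _

theorem map_one_of_leibniz {n : Type*} [DecidableEq n] (δ : R → R)
    (hδ_add : ∀ a b : R, δ (a + b) = δ a + δ b)
    (hδ_leibniz : ∀ a b : R, δ (a * b) = δ a * b + a * δ b) :
    (1 : Matrix n n R).map δ = 0 := by
  have hδ_zero : δ 0 = 0 := by simpa using (hδ_add 0 0).symm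
  have hδ_one : δ 1 = 0 := by simpa using hδ_leibniz 1 1
  ext i j
  rw [map_apply, one_apply]
  split_ifs <;> simp [hδ_zero, hδ_one]

end Matrix

section Prolongation

open Matrix

variable {R : Type*} [CommRing R] {n : ℕ}

theorem prolong_mul (δ : R → R)
    (hδ_add : ∀ a b : R, δ (a + b) = δ a + δ b)
    (hδ_leibniz : ∀ a b : R, δ (a * b) = δ a * b + a * δ b)
    (A B : Matrix (Fin n) (Fin n) R) :
    prolong δ (A * B) = prolong δ A * prolong δ B := by
  rw [prolong, prolong, prolong, fromBlocks_multiply,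
    map_mul_of_leibniz δ hδ_add hδ_leibniz, add_comm (A.map δ * B)]
  simp

theorem prolong_one (δ : R → R)
    (hδ_add : ∀ a b : R, δ (a + b) = δ a + δ b)
    (hδ_leibniz : ∀ a b : R, δ (a * b) = δ a * b + a * δ b) :
    prolong δ (1 : Matrix (Fin n) (Fin n) R) = 1 := by
  rw [prolong, map_one_of_leibniz δ hδ_add hδ_leibniz, fromBlocks_one]

theorem prolong_transpose (δ : R → R) (A : Matrix (Fin n) (Fin n) R) :
    prolong δ Aᵀ = fromBlocks 0 1 1 0 * (prolong δ A)ᵀ * fromBlocks 0 1 1 0 := by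
  simp [prolong, fromBlocks_transpose, fromBlocks_multiply, transpose_map]

theorem prolong_inv_eq (δ : R → R)
    (hδ_add : ∀ a b : R, δ (a + b) = δ a + δ b)
    (hδ_leibniz : ∀ a b : R, δ (a * b) = δ a * b + a * δ b)
    {g gi : Matrix (Fin n) (Fin n) R} (hig : gi * g = 1)
    {Q : Matrix (Fin n ⊕ Fin n) (Fin n ⊕ Fin n) R} (hQ : prolong δ g * Q = 1) :
    Q = prolong δ gi := by
  have hleft : prolong δ gi * prolong δ g = 1 := by
    rw [← prolong_mul δ hδ_add hδ_leibniz, hig, prolong_one δ hδ_add hδ_leibniz]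
  calc Q = prolong δ gi * prolong δ g * Q := by rw [hleft, one_mul]
    _ = prolong δ gi := by rw [mul_assoc, hQ, mul_one]

end Prolongation

theorem stmt_10_general {R : Type*} [CommRing R] {n : ℕ}
    (δ : R → R)
    (hδ_add : ∀ a b : R, δ (a + b) = δ a + δ b)
    (hδ_leibniz : ∀ a b : R, δ (a * b) = δ a * b + a * δ b)
    (g gi : Matrix (Fin n) (Fin n) R)
    (hig : gi * g = 1)
    (S : Matrix (Fin n ⊕ Fin n) (Fin n ⊕ Fin n) R)
    (hS : S = Matrix.fromBlocks 0 1 1 0)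
    (Q : Matrix (Fin n ⊕ Fin n) (Fin n ⊕ Fin n) R)
    (hQ : prolong δ g * Q = 1) :
    prolong δ gi.transpose = S * Q.transpose * S := by
  rw [hS, prolong_inv_eq δ hδ_add hδ_leibniz hig hQ]
  exact prolong_transpose δ gi

/-- for a derivation `δ` on a commutative ring `R`, an invertible `n × n`
matrix `g` (with two-sided inverse `gi`), the block swap `S = [[0, I],[I, 0]]`, and any
two-sided inverse `Q` of `P(g)`, one has `P((g⁻¹)ᵀ) = S · (P(g)⁻¹)ᵀ · S`. -/
theorem stmt_10 {R : Type*} [CommRing R] {n : ℕ}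
    (δ : R → R)
    (hδ_add : ∀ a b : R, δ (a + b) = δ a + δ b)
    (hδ_leibniz : ∀ a b : R, δ (a * b) = δ a * b + a * δ b)
    (g gi : Matrix (Fin n) (Fin n) R)
    (hgi : g * gi = 1) (hig : gi * g = 1)
    (S : Matrix (Fin n ⊕ Fin n) (Fin n ⊕ Fin n) R)
    (hS : S = Matrix.fromBlocks 0 1 1 0)
    (Q : Matrix (Fin n ⊕ Fin n) (Fin n ⊕ Fin n) R)
    (hQ : prolong δ g * Q = 1) (hQ' : Q * prolong δ g = 1) :
    prolong δ gi.transpose = S * Q.transpose * S :=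
  stmt_10_general δ hδ_add hδ_leibniz g gi hig S hS Q hQ
end
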